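/- arXiv:2511.20062 — 3 statements merged into one kernel-verified Lean document; each statement's English description precedes it below -/
import Mathlib

section
/- Let α > 1 be a real number and let c : ℕ → ℝ be a sequence such that ‖c‖ := sup_{m ≥ 1} m^α · |c_m| is finite. Then: (i) for every integer q ≥ 1 the series Σ_{p=1}^∞ c_{2pq} converges absolutely and q^α · |Σ_{p=1}^∞ c_{2pq}| ≤ (ζ(α) / 2^α) · ‖c‖, where ζ(α) = Σ_{p=1}^∞ p^{-α}; (ii) if moreover m^α · c_m → 0 as m → ∞, then q^α · Σ_{p=1}^∞ c_{2pq} → 0 as q → ∞. -/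
open Filter Topology

private lemma zeta_summable {α : ℝ} (hα : 1 < α) :
    Summable (fun p : ℕ => ((p : ℝ) + 1) ^ (-α)) := by
  have h : Summable (fun n : ℕ => (n : ℝ) ^ (-α)) :=
    Real.summable_nat_rpow.mpr (by linarith)
  exact ((summable_nat_add_iff 1).mpr h).congr (fun p => by push_cast; ring_nf)

private lemma key_bound {α : ℝ} (hα : 1 < α) (c : ℕ → ℝ) (B : ℝ) (q : ℕ) (hq : 1 ≤ q)
    (hB : ∀ p : ℕ, ((2 * (p + 1) * q : ℕ) : ℝ) ^ α * |c (2 * (p + 1) * q)| ≤ B) :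
    Summable (fun p : ℕ => |c (2 * (p + 1) * q)|) ∧
    (q : ℝ) ^ α * ∑' p : ℕ, |c (2 * (p + 1) * q)| ≤
      ((∑' p : ℕ, ((p : ℝ) + 1) ^ (-α)) / 2 ^ α) * B := by
  have hq' : (0 : ℝ) < q := by exact_mod_cast hq
  have hB0 : 0 ≤ B := le_trans (by positivity) (hB 0)
  have bound : ∀ p : ℕ, |c (2 * (p + 1) * q)| ≤
      (B * (2 : ℝ) ^ (-α) * (q : ℝ) ^ (-α)) * ((p : ℝ) + 1) ^ (-α) := by
    intro p
    have hmpos : (0 : ℝ) < ((2 * (p + 1) * q : ℕ) : ℝ) := by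
      have : 0 < 2 * (p + 1) * q := Nat.mul_pos (Nat.mul_pos two_pos p.succ_pos) hq
      exact_mod_cast this
    have h1 : |c (2 * (p + 1) * q)| ≤ B * ((2 * (p + 1) * q : ℕ) : ℝ) ^ (-α) := by
      have h2 := mul_le_mul_of_nonneg_right (hB p)
        (Real.rpow_nonneg hmpos.le (-α))
      rw [mul_right_comm, ← Real.rpow_add hmpos, add_neg_cancel, Real.rpow_zero,
        one_mul] at h2
      exact h2
    have h3 : ((2 * (p + 1) * q : ℕ) : ℝ) ^ (-α) =
        (2 : ℝ) ^ (-α) * ((p : ℝ) + 1) ^ (-α) * (q : ℝ) ^ (-α) := by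
      have : ((2 * (p + 1) * q : ℕ) : ℝ) = 2 * ((p : ℝ) + 1) * (q : ℝ) := by push_cast; ring
      rw [this, Real.mul_rpow (by positivity) (by positivity),
        Real.mul_rpow (by positivity) (by positivity)]
    rw [h3] at h1
    calc |c (2 * (p + 1) * q)| ≤ B * ((2:ℝ)^(-α) * ((p:ℝ)+1)^(-α) * (q:ℝ)^(-α)) := h1
      _ = (B * (2 : ℝ) ^ (-α) * (q : ℝ) ^ (-α)) * ((p : ℝ) + 1) ^ (-α) := by ring
  have hζ := zeta_summable hα
  have hsum : Summable (fun p : ℕ => |c (2 * (p + 1) * q)|) :=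
    Summable.of_nonneg_of_le (fun p => abs_nonneg _) bound
      (hζ.mul_left _)
  refine ⟨hsum, ?_⟩
  have htsum : ∑' p : ℕ, |c (2 * (p + 1) * q)| ≤
      (B * (2 : ℝ) ^ (-α) * (q : ℝ) ^ (-α)) * ∑' p : ℕ, ((p : ℝ) + 1) ^ (-α) := by
    rw [← tsum_mul_left]
    exact Summable.tsum_le_tsum bound hsum (hζ.mul_left _)
  have h4 := mul_le_mul_of_nonneg_left htsum (Real.rpow_nonneg hq'.le α)
  calc (q : ℝ) ^ α * ∑' p : ℕ, |c (2 * (p + 1) * q)|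
      ≤ (q : ℝ) ^ α * ((B * (2 : ℝ) ^ (-α) * (q : ℝ) ^ (-α)) * ∑' p : ℕ, ((p : ℝ) + 1) ^ (-α)) := h4
    _ = ((q : ℝ) ^ α * (q : ℝ) ^ (-α)) * ((2 : ℝ) ^ (-α) * (∑' p : ℕ, ((p : ℝ) + 1) ^ (-α)) * B) := by ring
    _ = ((∑' p : ℕ, ((p : ℝ) + 1) ^ (-α)) / 2 ^ α) * B := by
        rw [← Real.rpow_add hq', add_neg_cancel, Real.rpow_zero,
          Real.rpow_neg (by norm_num : (0:ℝ) ≤ 2)]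
        ring

/-- Proposition 35 (boundedness of the symmetric Dirichlet operator):
if `‖c‖ = sup_{m ≥ 1} m^α |c m|` is finite, then for every `q ≥ 1` the series
`Σ_{p ≥ 1} c (2 p q)` converges absolutely with
`q^α |Σ_{p ≥ 1} c (2 p q)| ≤ (ζ(α) / 2^α) ‖c‖`, and if moreover
`m^α c m → 0` then `q^α Σ_{p ≥ 1} c (2 p q) → 0` as `q → ∞`. -/
theorem dirichlet_operator_bound (α : ℝ) (hα : 1 < α) (c : ℕ → ℝ)
    (hbdd : BddAbove {x : ℝ | ∃ m : ℕ, 1 ≤ m ∧ x = (m : ℝ) ^ α * |c m|}) :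
    (∀ q : ℕ, 1 ≤ q →
      Summable (fun p : ℕ => |c (2 * (p + 1) * q)|) ∧
      (q : ℝ) ^ α * |∑' p : ℕ, c (2 * (p + 1) * q)| ≤
        ((∑' p : ℕ, ((p : ℝ) + 1) ^ (-α)) / 2 ^ α) *
          sSup {x : ℝ | ∃ m : ℕ, 1 ≤ m ∧ x = (m : ℝ) ^ α * |c m|}) ∧
    (Tendsto (fun m : ℕ => (m : ℝ) ^ α * c m) atTop (𝓝 0) →
      Tendsto (fun q : ℕ => (q : ℝ) ^ α * ∑' p : ℕ, c (2 * (p + 1) * q))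
        atTop (𝓝 0)) := by
  set M := sSup {x : ℝ | ∃ m : ℕ, 1 ≤ m ∧ x = (m : ℝ) ^ α * |c m|} with hM
  have hle : ∀ m : ℕ, 1 ≤ m → (m : ℝ) ^ α * |c m| ≤ M :=
    fun m hm => le_csSup hbdd ⟨m, hm, rfl⟩
  have habs : ∀ q : ℕ, 1 ≤ q → ∀ p : ℕ,
      (q : ℝ) ^ α * |∑' p : ℕ, c (2 * (p + 1) * q)| ≤
      (q : ℝ) ^ α * ∑' p : ℕ, |c (2 * (p + 1) * q)| := by
    intro q hq p
    have hq' : (0 : ℝ) < q := by exact_mod_cast hq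
    have hsum := (key_bound hα c M q hq
      (fun p => hle _ ((Nat.mul_pos (Nat.mul_pos two_pos p.succ_pos) hq)))).1
    refine mul_le_mul_of_nonneg_left ?_ (Real.rpow_nonneg hq'.le α)
    simpa using norm_tsum_le_tsum_norm (f := fun p : ℕ => c (2 * (p + 1) * q)) (by simpa using hsum)
  constructor
  · intro q hq
    have hB : ∀ p : ℕ, ((2 * (p + 1) * q : ℕ) : ℝ) ^ α * |c (2 * (p + 1) * q)| ≤ M :=
      fun p => hle _ (Nat.mul_pos (Nat.mul_pos two_pos p.succ_pos) hq)
    obtain ⟨hsum, hbd⟩ := key_bound hα c M q hq hB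
    exact ⟨hsum, le_trans (habs q hq 0) hbd⟩
  · intro h
    rw [NormedAddCommGroup.tendsto_nhds_zero]
    intro ε hε
    set ζ := ∑' p : ℕ, ((p : ℝ) + 1) ^ (-α) with hζdef
    have hζ0 : 0 ≤ ζ := tsum_nonneg (fun p => Real.rpow_nonneg (by positivity) _)
    have hK0 : 0 ≤ ζ / 2 ^ α := div_nonneg hζ0 (Real.rpow_nonneg (by norm_num) α)
    set K := ζ / 2 ^ α with hKdef
    have hε' : 0 < ε / (K + 1) := div_pos hε (by linarith)
    obtain ⟨N, hN⟩ := Metric.tendsto_atTop.mp h (ε / (K + 1)) hε'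
    rw [eventually_atTop]
    refine ⟨max N 1, fun q hq => ?_⟩
    have hq1 : 1 ≤ q := le_trans (le_max_right N 1) hq
    have hqN : N ≤ q := le_trans (le_max_left N 1) hq
    have hB : ∀ p : ℕ, ((2 * (p + 1) * q : ℕ) : ℝ) ^ α * |c (2 * (p + 1) * q)| ≤ ε / (K + 1) := by
      intro p
      have hm : N ≤ 2 * (p + 1) * q := le_trans hqN (by nlinarith)
      have := hN _ hm
      rw [Real.dist_eq, sub_zero, abs_mul, abs_of_nonneg (Real.rpow_nonneg (by positivity) α)] at this
      exact this.le
    obtain ⟨hsum, hbd⟩ := key_bound hα c (ε / (K + 1)) q hq1 hB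
    have h1 : (q : ℝ) ^ α * |∑' p : ℕ, c (2 * (p + 1) * q)| ≤ K * (ε / (K + 1)) :=
      le_trans (habs q hq1 0) hbd
    have hq' : (0 : ℝ) < q := by exact_mod_cast hq1
    have : ‖(q : ℝ) ^ α * ∑' p : ℕ, c (2 * (p + 1) * q)‖ =
        (q : ℝ) ^ α * |∑' p : ℕ, c (2 * (p + 1) * q)| := by
      rw [Real.norm_eq_abs, abs_mul, abs_of_nonneg (Real.rpow_nonneg hq'.le α)]
    rw [this]
    have : K * (ε / (K + 1)) < ε := by
      rw [mul_div_assoc'] at *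
      rw [div_lt_iff₀ (by linarith)]
      nlinarith
    linarith
end

section
/- Let α > 1 be a real number and let c : ℕ → ℝ be a sequence such that sup_{m ≥ 1} m^α · |c_m| is finite. For q ≥ 1 define u_q = Σ_{p=1}^∞ c_{pq} (an absolutely convergent series). Then for every integer j ≥ 1 the series Σ_{ℓ=1}^∞ μ(ℓ) · u_{ℓj} converges absolutely and Σ_{ℓ=1}^∞ μ(ℓ) · u_{ℓj} = c_j. -/
open ArithmeticFunction

set_option maxHeartbeats 1000000 in
/-- Proposition 35 (Möbius inversion direction M ∘ Δ = id): if
`sup_{m ≥ 1} m^α |c m| < ∞` and `u q = Σ_{p ≥ 1} c (p q)`, then for every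
`j ≥ 1` the series `Σ_{ℓ ≥ 1} μ(ℓ) u (ℓ j)` converges absolutely and equals `c j`. -/
theorem moebius_left_inverse_dirichlet (α : ℝ) (hα : 1 < α) (c : ℕ → ℝ)
    (hbdd : BddAbove {x : ℝ | ∃ m : ℕ, 1 ≤ m ∧ x = (m : ℝ) ^ α * |c m|})
    (u : ℕ → ℝ) (hu : ∀ q : ℕ, 1 ≤ q → u q = ∑' p : ℕ, c ((p + 1) * q)) :
    ∀ j : ℕ, 1 ≤ j →
      Summable (fun ℓ : ℕ => |(ArithmeticFunction.moebius (ℓ + 1) : ℝ) * u ((ℓ + 1) * j)|) ∧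
      ∑' ℓ : ℕ, (ArithmeticFunction.moebius (ℓ + 1) : ℝ) * u ((ℓ + 1) * j) = c j := by
  intro j hj
  obtain ⟨C, hC⟩ := hbdd
  set C' : ℝ := max C 0 with hC'def
  have hC'0 : (0:ℝ) ≤ C' := le_max_right _ _
  have hαpos : (0:ℝ) < α := lt_trans one_pos hα
  -- pointwise decay bound
  have hc : ∀ m : ℕ, 1 ≤ m → |c m| ≤ C' * (m:ℝ) ^ (-α) := by
    intro m hm
    have hm0 : (0:ℝ) < (m:ℝ) := by exact_mod_cast hm
    have h1 : (m:ℝ) ^ α * |c m| ≤ C' :=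
      le_trans (hC ⟨m, hm, rfl⟩) (le_max_left _ _)
    have hpow : (0:ℝ) < (m:ℝ) ^ α := Real.rpow_pos_of_pos hm0 α
    calc |c m| = ((m:ℝ) ^ α * |c m|) * ((m:ℝ) ^ α)⁻¹ := by field_simp
      _ ≤ C' * ((m:ℝ) ^ α)⁻¹ := mul_le_mul_of_nonneg_right h1 (inv_nonneg.2 hpow.le)
      _ = C' * (m:ℝ) ^ (-α) := by rw [Real.rpow_neg hm0.le]
  have hrpow_le_one : ∀ b : ℕ, 1 ≤ b → ((b:ℝ)) ^ (-α) ≤ 1 := by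
    intro b hb
    exact Real.rpow_le_one_of_one_le_of_nonpos (by exact_mod_cast hb) (neg_nonpos.2 hαpos.le)
  have hmul_rpow : ∀ a b : ℕ, (((a * b : ℕ) : ℝ)) ^ (-α) = (a:ℝ) ^ (-α) * (b:ℝ) ^ (-α) := by
    intro a b
    push_cast
    exact Real.mul_rpow (Nat.cast_nonneg a) (Nat.cast_nonneg b)
  -- base summable series
  have hsum0 : Summable (fun n : ℕ => (n:ℝ) ^ (-α)) :=
    Real.summable_nat_rpow.2 (by linarith)
  have hsum1 : Summable (fun n : ℕ => (((n + 1 : ℕ)):ℝ) ^ (-α)) :=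
    (summable_nat_add_iff 1).2 hsum0
  set S : ℝ := ∑' p : ℕ, (((p + 1 : ℕ)):ℝ) ^ (-α) with hSdef
  have hS0 : 0 ≤ S := tsum_nonneg fun p => Real.rpow_nonneg (Nat.cast_nonneg _) _
  -- bound on the terms of u q
  have hcpq : ∀ q : ℕ, 1 ≤ q → ∀ p : ℕ,
      |c ((p + 1) * q)| ≤ (C' * (q:ℝ) ^ (-α)) * (((p + 1 : ℕ)):ℝ) ^ (-α) := by
    intro q hq p
    have h := hc ((p + 1) * q) (Nat.one_le_iff_ne_zero.2 (by positivity))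
    calc |c ((p + 1) * q)| ≤ C' * (((p + 1) * q : ℕ):ℝ) ^ (-α) := h
      _ = (C' * (q:ℝ) ^ (-α)) * (((p + 1 : ℕ)):ℝ) ^ (-α) := by
          rw [hmul_rpow]; ring
  have hsumc : ∀ q : ℕ, 1 ≤ q → Summable (fun p : ℕ => |c ((p + 1) * q)|) := by
    intro q hq
    exact Summable.of_nonneg_of_le (fun p => abs_nonneg _) (hcpq q hq)
      (hsum1.mul_left _)
  have huabs : ∀ q : ℕ, 1 ≤ q → |u q| ≤ C' * (q:ℝ) ^ (-α) * S := by
    intro q hq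
    rw [hu q hq]
    have h1 : |∑' p : ℕ, c ((p + 1) * q)| ≤ ∑' p : ℕ, |c ((p + 1) * q)| := by
      simpa [Real.norm_eq_abs] using
        norm_tsum_le_tsum_norm (f := fun p : ℕ => c ((p + 1) * q))
          (by simpa [Real.norm_eq_abs] using hsumc q hq)
    refine h1.trans ?_
    calc ∑' p : ℕ, |c ((p + 1) * q)|
        ≤ ∑' p : ℕ, (C' * (q:ℝ) ^ (-α)) * (((p + 1 : ℕ)):ℝ) ^ (-α) :=
          Summable.tsum_le_tsum (hcpq q hq) (hsumc q hq) (hsum1.mul_left _)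
      _ = C' * (q:ℝ) ^ (-α) * S := tsum_mul_left
  have hmu_abs : ∀ n : ℕ, |((moebius n : ℤ):ℝ)| ≤ 1 := by
    intro n
    exact_mod_cast (abs_moebius_le_one (n := n))
  -- part 1: absolute summability
  have hterm : ∀ ℓ : ℕ, |(moebius (ℓ + 1) : ℝ) * u ((ℓ + 1) * j)| ≤
      (C' * S) * (((ℓ + 1 : ℕ)):ℝ) ^ (-α) := by
    intro ℓ
    have hq1 : 1 ≤ (ℓ + 1) * j := Nat.one_le_iff_ne_zero.2 (by positivity)
    have h2 := huabs ((ℓ + 1) * j) hq1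
    have h3 : ((((ℓ + 1) * j : ℕ)):ℝ) ^ (-α) ≤ (((ℓ + 1 : ℕ)):ℝ) ^ (-α) := by
      rw [hmul_rpow]
      have := hrpow_le_one j hj
      have hnn : (0:ℝ) ≤ (((ℓ + 1 : ℕ)):ℝ) ^ (-α) := Real.rpow_nonneg (Nat.cast_nonneg _) _
      nlinarith
    have hun : (0:ℝ) ≤ |u ((ℓ + 1) * j)| := abs_nonneg _
    calc |(moebius (ℓ + 1) : ℝ) * u ((ℓ + 1) * j)|
        = |((moebius (ℓ + 1) : ℤ):ℝ)| * |u ((ℓ + 1) * j)| := by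
          rw [← abs_mul]
      _ ≤ 1 * |u ((ℓ + 1) * j)| := mul_le_mul_of_nonneg_right (hmu_abs _) hun
      _ = |u ((ℓ + 1) * j)| := one_mul _
      _ ≤ C' * ((((ℓ + 1) * j : ℕ)):ℝ) ^ (-α) * S := h2
      _ ≤ C' * (((ℓ + 1 : ℕ)):ℝ) ^ (-α) * S :=
          mul_le_mul_of_nonneg_right (mul_le_mul_of_nonneg_left h3 hC'0) hS0
      _ = (C' * S) * (((ℓ + 1 : ℕ)):ℝ) ^ (-α) := by ring
  have part1 : Summable (fun ℓ : ℕ => |(moebius (ℓ + 1) : ℝ) * u ((ℓ + 1) * j)|) :=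
    Summable.of_nonneg_of_le (fun ℓ => abs_nonneg _) hterm (hsum1.mul_left _)
  refine ⟨part1, ?_⟩
  -- the global double-indexed function
  set G : ℕ × ℕ → ℝ :=
    fun z => (moebius z.1 : ℝ) * (if z.1 * z.2 = 0 then 0 else c (z.1 * z.2 * j)) with hGdef
  have hGabs : ∀ z : ℕ × ℕ, |G z| ≤ (C' * (z.1:ℝ) ^ (-α)) * ((z.2:ℝ) ^ (-α)) := by
    intro z
    rcases Nat.eq_zero_or_pos z.1 with h1 | h1
    · have : G z = 0 := by simp [hGdef, h1]
      rw [this, abs_zero]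
      positivity
    rcases Nat.eq_zero_or_pos z.2 with h2 | h2
    · have : G z = 0 := by simp [hGdef, h2]
      rw [this, abs_zero]
      positivity
    have hz : z.1 * z.2 ≠ 0 := by positivity
    have hm1 : 1 ≤ z.1 * z.2 * j := Nat.one_le_iff_ne_zero.2 (by positivity)
    have hcb := hc (z.1 * z.2 * j) hm1
    have hdecomp : (((z.1 * z.2 * j : ℕ)):ℝ) ^ (-α)
        = (z.1:ℝ) ^ (-α) * (z.2:ℝ) ^ (-α) * (j:ℝ) ^ (-α) := by
      rw [hmul_rpow (z.1 * z.2) j, hmul_rpow z.1 z.2]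
    have hj1 := hrpow_le_one j hj
    have hnn1 : (0:ℝ) ≤ (z.1:ℝ) ^ (-α) := Real.rpow_nonneg (Nat.cast_nonneg _) _
    have hnn2 : (0:ℝ) ≤ (z.2:ℝ) ^ (-α) := Real.rpow_nonneg (Nat.cast_nonneg _) _
    have hnnj : (0:ℝ) ≤ (j:ℝ) ^ (-α) := Real.rpow_nonneg (Nat.cast_nonneg _) _
    calc |G z| = |((moebius z.1 : ℤ):ℝ)| * |c (z.1 * z.2 * j)| := by
          rw [hGdef]; simp only [hz, if_neg, ite_false]; rw [← abs_mul]
      _ ≤ 1 * |c (z.1 * z.2 * j)| := mul_le_mul_of_nonneg_right (hmu_abs _) (abs_nonneg _)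
      _ = |c (z.1 * z.2 * j)| := one_mul _
      _ ≤ C' * (((z.1 * z.2 * j : ℕ)):ℝ) ^ (-α) := hcb
      _ = C' * ((z.1:ℝ) ^ (-α) * (z.2:ℝ) ^ (-α) * (j:ℝ) ^ (-α)) := by rw [hdecomp]
      _ ≤ (C' * (z.1:ℝ) ^ (-α)) * ((z.2:ℝ) ^ (-α)) := by
          have h4 : (z.1:ℝ) ^ (-α) * (z.2:ℝ) ^ (-α) * (j:ℝ) ^ (-α)
              ≤ (z.1:ℝ) ^ (-α) * (z.2:ℝ) ^ (-α) :=
            mul_le_of_le_one_right (mul_nonneg hnn1 hnn2) hj1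
          calc C' * ((z.1:ℝ) ^ (-α) * (z.2:ℝ) ^ (-α) * (j:ℝ) ^ (-α))
              ≤ C' * ((z.1:ℝ) ^ (-α) * (z.2:ℝ) ^ (-α)) :=
                mul_le_mul_of_nonneg_left h4 hC'0
            _ = (C' * (z.1:ℝ) ^ (-α)) * ((z.2:ℝ) ^ (-α)) := by ring
  have hB : Summable (fun z : ℕ × ℕ => (C' * (z.1:ℝ) ^ (-α)) * ((z.2:ℝ) ^ (-α))) :=
    Summable.mul_of_nonneg (hsum0.mul_left C') hsum0
      (fun n => by positivity) (fun n => Real.rpow_nonneg (Nat.cast_nonneg _) _)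
  have hGA : Summable (fun z : ℕ × ℕ => |G z|) :=
    Summable.of_nonneg_of_le (fun z => abs_nonneg _) hGabs hB
  have hG : Summable G := summable_abs_iff.1 hGA
  -- fiberwise sum over n = z.1 * z.2
  have hfib : HasSum
      (fun n : ℕ => ∑' z : (fun z : ℕ × ℕ => z.1 * z.2) ⁻¹' {n}, G z.val)
      (∑' z : ℕ × ℕ, G z) :=
    hG.hasSum.tsum_fiberwise (fun z : ℕ × ℕ => z.1 * z.2)
  -- the moebius divisor sum
  have hμsum : ∀ n : ℕ, (∑ d ∈ n.divisors, (moebius d : ℤ)) = if n = 1 then 1 else 0 := by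
    intro n
    rw [← ArithmeticFunction.coe_mul_zeta_apply, moebius_mul_coe_zeta,
      ArithmeticFunction.one_apply]
  have hfib_eq : ∀ n : ℕ,
      (∑' z : (fun z : ℕ × ℕ => z.1 * z.2) ⁻¹' {n}, G z.val)
        = if n = 1 then c j else 0 := by
    intro n
    rcases eq_or_ne n 0 with rfl | hn
    · have hzero : ∀ z : (fun z : ℕ × ℕ => z.1 * z.2) ⁻¹' {(0:ℕ)}, G z.val = 0 := by
        rintro ⟨z, hz⟩
        have hz0 : z.1 * z.2 = 0 := hz
        show (moebius z.1 : ℝ) * (if z.1 * z.2 = 0 then 0 else c (z.1 * z.2 * j)) = 0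
        rw [if_pos hz0, mul_zero]
      simp [tsum_congr hzero, tsum_zero]
    · have hset : (fun z : ℕ × ℕ => z.1 * z.2) ⁻¹' {n} = ↑n.divisorsAntidiagonal := by
        ext z
        simp [Nat.mem_divisorsAntidiagonal, hn, eq_comm]
      rw [hset, Finset.tsum_subtype' n.divisorsAntidiagonal G]
      have hsum_eq : ∑ z ∈ n.divisorsAntidiagonal, G z
          = ∑ z ∈ n.divisorsAntidiagonal, (moebius z.1 : ℝ) * c (n * j) := by
        refine Finset.sum_congr rfl fun z hz => ?_
        have hzn : z.1 * z.2 = n := (Nat.mem_divisorsAntidiagonal.mp hz).1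
        rw [hGdef]
        simp only [hzn, hn, ite_false, if_neg hn]
      rw [hsum_eq]
      rw [Nat.sum_divisorsAntidiagonal (fun a b => (moebius a : ℝ) * c (n * j))]
      rw [← Finset.sum_mul]
      have hcast : (∑ d ∈ n.divisors, ((moebius d : ℤ):ℝ))
          = (((∑ d ∈ n.divisors, (moebius d : ℤ)) : ℤ) : ℝ) := by push_cast; rfl
      rw [hcast, hμsum n]
      rcases eq_or_ne n 1 with rfl | hn1
      · simp
      · simp [hn1]
  have hG_eq : (∑' z : ℕ × ℕ, G z) = c j := by
    have hone : HasSum (fun n : ℕ => if n = 1 then c j else 0) (c j) :=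
      hasSum_ite_eq 1 (c j)
    have := (funext hfib_eq : _) ▸ hfib
    exact this.unique hone
  -- identify the left-hand side with the double sum
  have hμu : ∀ ℓ : ℕ, (moebius (ℓ + 1) : ℝ) * u ((ℓ + 1) * j)
      = ∑' p : ℕ, G (ℓ + 1, p + 1) := by
    intro ℓ
    have hq1 : 1 ≤ (ℓ + 1) * j := Nat.one_le_iff_ne_zero.2 (by positivity)
    rw [hu ((ℓ + 1) * j) hq1, ← tsum_mul_left]
    refine tsum_congr fun p => ?_
    have : (ℓ + 1) * (p + 1) ≠ 0 := by positivity
    simp only [hGdef, this, ite_false, if_neg this]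
    ring_nf
  have hinj : Function.Injective (fun w : ℕ × ℕ => ((w.1 + 1, w.2 + 1) : ℕ × ℕ)) := by
    intro a b hab
    simp only [Prod.mk.injEq, add_left_injective] at hab
    exact Prod.ext (by omega) (by omega)
  have hsupp : Function.support G ⊆ Set.range (fun w : ℕ × ℕ => ((w.1 + 1, w.2 + 1) : ℕ × ℕ)) := by
    intro z hz
    rcases Nat.eq_zero_or_pos z.1 with h1 | h1
    · exfalso; apply hz; simp [hGdef, h1]
    rcases Nat.eq_zero_or_pos z.2 with h2 | h2
    · exfalso; apply hz; simp [hGdef, h2]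
    refine ⟨(z.1 - 1, z.2 - 1), ?_⟩
    have e1 : z.1 - 1 + 1 = z.1 := by omega
    have e2 : z.2 - 1 + 1 = z.2 := by omega
    simp only [e1, e2]
  have hshift : (∑' w : ℕ × ℕ, G (w.1 + 1, w.2 + 1)) = ∑' z : ℕ × ℕ, G z :=
    hinj.tsum_eq hsupp
  have hGshift : Summable (fun w : ℕ × ℕ => G (w.1 + 1, w.2 + 1)) :=
    (hG.comp_injective hinj)
  calc (∑' ℓ : ℕ, (moebius (ℓ + 1) : ℝ) * u ((ℓ + 1) * j))
      = ∑' ℓ : ℕ, ∑' p : ℕ, G (ℓ + 1, p + 1) := tsum_congr hμu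
    _ = ∑' w : ℕ × ℕ, G (w.1 + 1, w.2 + 1) :=
        (Summable.tsum_prod' hGshift (fun ℓ => (hG.comp_injective hinj).prod_factor ℓ)).symm
    _ = ∑' z : ℕ × ℕ, G z := hshift
    _ = c j := hG_eq
end

section
/- Let α > 1 be a real number and let u : ℕ → ℝ be a sequence such that sup_{q ≥ 1} q^α · |u_q| is finite. For j ≥ 1 define c_j = Σ_{ℓ=1}^∞ μ(ℓ) · u_{ℓj} (an absolutely convergent series). Then for every integer q ≥ 1 the series Σ_{p=1}^∞ c_{pq} converges absolutely and Σ_{p=1}^∞ c_{pq} = u_q. -/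
open ArithmeticFunction

/-- Proposition 35 (Dirichlet inversion direction Δ ∘ M = id): if
`sup_{q ≥ 1} q^α |u q| < ∞` and `c j = Σ_{ℓ ≥ 1} μ(ℓ) u (ℓ j)`, then for every
`q ≥ 1` the series `Σ_{p ≥ 1} c (p q)` converges absolutely and equals `u q`. -/
theorem dirichlet_left_inverse_moebius (α : ℝ) (hα : 1 < α) (u : ℕ → ℝ)
    (hbdd : BddAbove {x : ℝ | ∃ q : ℕ, 1 ≤ q ∧ x = (q : ℝ) ^ α * |u q|})
    (c : ℕ → ℝ)
    (hc : ∀ j : ℕ, 1 ≤ j →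
      c j = ∑' ℓ : ℕ, (ArithmeticFunction.moebius (ℓ + 1) : ℝ) * u ((ℓ + 1) * j)) :
    ∀ q : ℕ, 1 ≤ q →
      Summable (fun p : ℕ => |c ((p + 1) * q)|) ∧
      ∑' p : ℕ, c ((p + 1) * q) = u q := by
  obtain ⟨C, hC⟩ := hbdd
  have hC1 : ((1 : ℕ) : ℝ) ^ α * |u 1| ≤ C := hC ⟨1, le_refl 1, rfl⟩
  have hC0 : (0 : ℝ) ≤ C := by
    refine le_trans ?_ hC1
    positivity
  -- pointwise bound on u
  have hu : ∀ n : ℕ, 1 ≤ n → |u n| ≤ C * ((n : ℝ) ^ α)⁻¹ := by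
    intro n hn
    have hnpos : (0 : ℝ) < (n : ℝ) := by exact_mod_cast hn
    have hp : (0 : ℝ) < (n : ℝ) ^ α := Real.rpow_pos_of_pos hnpos α
    have hCn : (n : ℝ) ^ α * |u n| ≤ C := hC ⟨n, hn, rfl⟩
    calc |u n| = ((n : ℝ) ^ α * |u n|) * ((n : ℝ) ^ α)⁻¹ := by field_simp
      _ ≤ C * ((n : ℝ) ^ α)⁻¹ := by gcongr
  -- antitonicity of n ↦ n ^ (-α)
  have hmono : ∀ m n : ℕ, 1 ≤ m → m ≤ n → ((n : ℝ) ^ α)⁻¹ ≤ ((m : ℝ) ^ α)⁻¹ := by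
    intro m n hm hmn
    have hmpos : (0 : ℝ) < (m : ℝ) := by exact_mod_cast hm
    have h1 : (0 : ℝ) < (m : ℝ) ^ α := Real.rpow_pos_of_pos hmpos α
    have h2 : (m : ℝ) ^ α ≤ (n : ℝ) ^ α :=
      Real.rpow_le_rpow hmpos.le (by exact_mod_cast hmn) (by linarith)
    exact inv_anti₀ h1 h2
  intro q hq
  have hqpos : 0 < q := hq
  -- The double-indexed family
  set F : ℕ × ℕ → ℝ :=
    fun pl => (ArithmeticFunction.moebius (pl.2 + 1) : ℝ) * u ((pl.2 + 1) * ((pl.1 + 1) * q))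
    with hFdef
  -- summable majorant
  have hs : Summable (fun n : ℕ => (((n + 1 : ℕ) : ℝ) ^ α)⁻¹) := by
    have h0 : Summable (fun n : ℕ => (n : ℝ) ^ (-α)) :=
      Real.summable_nat_rpow.mpr (by linarith)
    have h1 : Summable (fun n : ℕ => (((n + 1 : ℕ) : ℝ)) ^ (-α)) :=
      (summable_nat_add_iff 1).mpr h0
    refine h1.congr fun n => ?_
    rw [Real.rpow_neg (by positivity)]
  have hG : Summable (fun pl : ℕ × ℕ =>
      (C * (((pl.1 + 1 : ℕ) : ℝ) ^ α)⁻¹) * (((pl.2 + 1 : ℕ) : ℝ) ^ α)⁻¹) := by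
    exact Summable.mul_of_nonneg (f := fun p : ℕ => C * (((p + 1 : ℕ) : ℝ) ^ α)⁻¹)
      (g := fun ℓ : ℕ => (((ℓ + 1 : ℕ) : ℝ) ^ α)⁻¹) (hs.mul_left C) hs
      (fun p => mul_nonneg hC0 (by positivity)) (fun p => by positivity)
  have hFG : ∀ pl : ℕ × ℕ, |F pl| ≤
      (C * (((pl.1 + 1 : ℕ) : ℝ) ^ α)⁻¹) * (((pl.2 + 1 : ℕ) : ℝ) ^ α)⁻¹ := by
    rintro ⟨p, ℓ⟩
    have hN1 : 1 ≤ (ℓ + 1) * ((p + 1) * q) := Nat.one_le_iff_ne_zero.mpr (by positivity)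
    have habsμ : |(ArithmeticFunction.moebius (ℓ + 1) : ℝ)| ≤ 1 := by
      have := ArithmeticFunction.abs_moebius_le_one (n := ℓ + 1)
      exact_mod_cast this
    have h1 : |F (p, ℓ)| ≤ |u ((ℓ + 1) * ((p + 1) * q))| := by
      rw [hFdef]
      dsimp only
      rw [abs_mul]
      nlinarith [abs_nonneg (u ((ℓ + 1) * ((p + 1) * q))),
        abs_nonneg ((ArithmeticFunction.moebius (ℓ + 1) : ℝ))]
    have h2 : |u ((ℓ + 1) * ((p + 1) * q))| ≤
        C * ((((ℓ + 1) * ((p + 1) * q) : ℕ) : ℝ) ^ α)⁻¹ := hu _ hN1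
    have h3 : ((((ℓ + 1) * ((p + 1) * q) : ℕ) : ℝ) ^ α)⁻¹ ≤
        ((((p + 1) * (ℓ + 1) : ℕ) : ℝ) ^ α)⁻¹ := by
      apply hmono
      · exact Nat.one_le_iff_ne_zero.mpr (by positivity)
      · calc (p + 1) * (ℓ + 1) = (ℓ + 1) * ((p + 1) * 1) := by ring
          _ ≤ (ℓ + 1) * ((p + 1) * q) := by
              apply Nat.mul_le_mul_left
              exact Nat.mul_le_mul_left _ hq
    have h4 : ((((p + 1) * (ℓ + 1) : ℕ) : ℝ) ^ α)⁻¹ =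
        (((p + 1 : ℕ) : ℝ) ^ α)⁻¹ * (((ℓ + 1 : ℕ) : ℝ) ^ α)⁻¹ := by
      push_cast
      rw [Real.mul_rpow (by positivity) (by positivity), mul_inv]
    calc |F (p, ℓ)| ≤ C * ((((ℓ + 1) * ((p + 1) * q) : ℕ) : ℝ) ^ α)⁻¹ := h1.trans h2
      _ ≤ C * ((((p + 1) * (ℓ + 1) : ℕ) : ℝ) ^ α)⁻¹ := by gcongr
      _ = (C * (((p + 1 : ℕ) : ℝ) ^ α)⁻¹) * (((ℓ + 1 : ℕ) : ℝ) ^ α)⁻¹ := by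
          rw [h4]; ring
  have hFabs : Summable (fun pl : ℕ × ℕ => |F pl|) :=
    Summable.of_nonneg_of_le (fun _ => abs_nonneg _) hFG hG
  have hF : Summable F := hFabs.of_abs
  have hsplit := (summable_prod_of_nonneg
    (f := fun pl : ℕ × ℕ => |F pl|) (fun _ => abs_nonneg _)).mp hFabs
  have hrow : ∀ p : ℕ, Summable fun ℓ => |F (p, ℓ)| := hsplit.1
  have hcol : Summable fun p : ℕ => ∑' ℓ, |F (p, ℓ)| := hsplit.2
  have hrowF : ∀ p : ℕ, Summable fun ℓ => F (p, ℓ) := fun p => (hrow p).of_abs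
  have hcF : ∀ p : ℕ, c ((p + 1) * q) = ∑' ℓ, F (p, ℓ) := by
    intro p
    have hj : 1 ≤ (p + 1) * q := Nat.one_le_iff_ne_zero.mpr (by positivity)
    rw [hc _ hj]
  -- summability of |c|
  have hsumc : Summable (fun p : ℕ => |c ((p + 1) * q)|) := by
    refine Summable.of_nonneg_of_le (fun _ => abs_nonneg _) (fun p => ?_) hcol
    rw [hcF p]
    simpa using norm_tsum_le_tsum_norm (f := fun ℓ => F (p, ℓ)) (by simpa using hrow p)
  refine ⟨hsumc, ?_⟩
  -- main computation
  have hstep1 : ∑' p : ℕ, c ((p + 1) * q) = ∑' pl : ℕ × ℕ, F pl := by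
    rw [tsum_congr hcF]
    exact (Summable.tsum_prod' hF hrowF).symm
  set m : ℕ × ℕ → ℕ := fun pl => (pl.1 + 1) * (pl.2 + 1) with hm
  have hfiber := (hF.hasSum.tsum_fiberwise m).tsum_eq
  -- hfiber : ∑' n, ∑' (b : ↑(m ⁻¹' {n})), F ↑b = ∑' pl, F pl
  have hfib : ∀ n : ℕ, (∑' b : ↑(m ⁻¹' {n}), F b) =
      (if n = 1 then 1 else 0) * u (n * q) := by
    intro n
    classical
    set A : Finset (ℕ × ℕ) :=
      n.divisorsAntidiagonal.image (fun d => (d.1 - 1, d.2 - 1)) with hA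
    have hset : m ⁻¹' {n} = ↑A := by
      ext pl
      simp only [Set.mem_preimage, Set.mem_singleton_iff, hA, Finset.coe_image,
        Set.mem_image, Finset.mem_coe, Nat.mem_divisorsAntidiagonal]
      constructor
      · intro h
        refine ⟨(pl.1 + 1, pl.2 + 1), ⟨h, ?_⟩, ?_⟩
        · rw [← h]; positivity
        · simp
      · rintro ⟨⟨a, b⟩, ⟨hab, hn0⟩, hrfl⟩
        have ha : 1 ≤ a := by
          rcases Nat.eq_zero_or_pos a with h | h
          · exfalso; apply hn0; rw [← hab, h, zero_mul]
          · exact h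
        have hb : 1 ≤ b := by
          rcases Nat.eq_zero_or_pos b with h | h
          · exfalso; apply hn0; rw [← hab, h, mul_zero]
          · exact h
        have h1 : pl.1 = a - 1 := by rw [← hrfl]
        have h2 : pl.2 = b - 1 := by rw [← hrfl]
        rw [hm]
        dsimp only
        rw [h1, h2, Nat.sub_add_cancel ha, Nat.sub_add_cancel hb, hab]
    rw [hset, Finset.tsum_subtype' A F, hA]
    rw [Finset.sum_image ?hinj]
    case hinj =>
      intro x hx y hy hxy
      obtain ⟨hxm, hxn⟩ := Nat.mem_divisorsAntidiagonal.mp hx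
      obtain ⟨hym, hyn⟩ := Nat.mem_divisorsAntidiagonal.mp hy
      have hx1 : 1 ≤ x.1 := Nat.pos_of_ne_zero (by intro h; apply hxn; rw [← hxm, h, zero_mul])
      have hx2 : 1 ≤ x.2 := Nat.pos_of_ne_zero (by intro h; apply hxn; rw [← hxm, h, mul_zero])
      have hy1 : 1 ≤ y.1 := Nat.pos_of_ne_zero (by intro h; apply hyn; rw [← hym, h, zero_mul])
      have hy2 : 1 ≤ y.2 := Nat.pos_of_ne_zero (by intro h; apply hyn; rw [← hym, h, mul_zero])
      have e1 : x.1 - 1 = y.1 - 1 := congrArg Prod.fst hxy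
      have e2 : x.2 - 1 = y.2 - 1 := congrArg Prod.snd hxy
      have : x.1 = y.1 := by omega
      have : x.2 = y.2 := by omega
      exact Prod.ext (by omega) (by omega)
    have hterm : ∀ d ∈ n.divisorsAntidiagonal,
        F (d.1 - 1, d.2 - 1) = (ArithmeticFunction.moebius d.2 : ℝ) * u (n * q) := by
      intro d hd
      obtain ⟨hdm, hdn⟩ := Nat.mem_divisorsAntidiagonal.mp hd
      have hd1 : 1 ≤ d.1 := Nat.pos_of_ne_zero (by intro h; apply hdn; rw [← hdm, h, zero_mul])
      have hd2 : 1 ≤ d.2 := Nat.pos_of_ne_zero (by intro h; apply hdn; rw [← hdm, h, mul_zero])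
      rw [hFdef]
      dsimp only
      rw [Nat.sub_add_cancel hd2, Nat.sub_add_cancel hd1]
      congr 1
      congr 1
      rw [← mul_assoc, mul_comm d.2 d.1, hdm]
    rw [Finset.sum_congr rfl hterm, ← Finset.sum_mul]
    congr 1
    have hz : ((ArithmeticFunction.zeta : ArithmeticFunction ℤ) *
        ArithmeticFunction.moebius) n =
        ∑ d ∈ n.divisorsAntidiagonal, ArithmeticFunction.moebius d.2 := by
      rw [ArithmeticFunction.mul_apply]
      refine Finset.sum_congr rfl fun d hd => ?_
      obtain ⟨hdm, hdn⟩ := Nat.mem_divisorsAntidiagonal.mp hd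
      have hd1 : d.1 ≠ 0 := by intro h; apply hdn; rw [← hdm, h, zero_mul]
      simp [ArithmeticFunction.zeta_apply, hd1]
    have hz' : (∑ d ∈ n.divisorsAntidiagonal, ArithmeticFunction.moebius d.2)
        = (if n = 1 then 1 else 0 : ℤ) := by
      rw [← hz, ArithmeticFunction.coe_zeta_mul_moebius, ArithmeticFunction.one_apply]
    calc (∑ d ∈ n.divisorsAntidiagonal, (ArithmeticFunction.moebius d.2 : ℝ))
        = ((∑ d ∈ n.divisorsAntidiagonal, ArithmeticFunction.moebius d.2 : ℤ) : ℝ) := by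
          push_cast; ring
      _ = (if n = 1 then 1 else 0 : ℝ) := by rw [hz']; split <;> simp
  rw [hstep1, ← hfiber, tsum_congr hfib, tsum_eq_single 1 (fun n hn => by simp [hn])]
  simp
end
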